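/- arXiv:2510.03866 — 2 statements merged into one kernel-verified Lean document; each statement's English description precedes it below -/
import Mathlib

section
/- (Loss function update.) Under Assumption 1 (L-smoothness), for every iteration t of FedMuon it holds that f(X̄_{t+1}) ≤ f(X̄_t) − η‖∇f(X̄_t)‖_F + 2η√n·(1/K)∑_{k=1}^K ‖M̄_t − M_t^{(k)}‖_F + 2η√n·L·(1/K)∑_{k=1}^K ‖X̄_t − X_t^{(k)}‖_F + 2η√n·‖(1/K)∑_{k=1}^K ∇f^{(k)}(X_t^{(k)}) − (1/K)∑_{k=1}^K M_t^{(k)}‖_F + η²nL/2. -/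
open MeasureTheory ProbabilityTheory Matrix Finset

noncomputable section

/-- The Frobenius norm of a real `m × n` matrix. -/
def frob {m n : ℕ} (A : Matrix (Fin m) (Fin n) ℝ) : ℝ :=
  Real.sqrt (∑ i, ∑ j, A i j ^ 2)

/-- The nuclear norm of a real matrix: the sum of its singular values,
realized as the trace of `√(AᵀA)`. -/
def nuclearNorm {m n : ℕ} (A : Matrix (Fin m) (Fin n) ℝ) : ℝ :=
  ((Matrix.posSemidef_conjTranspose_mul_self A).1.eigenvectorUnitary.1 *
    diagonal (fun i => Real.sqrt ((Matrix.posSemidef_conjTranspose_mul_self A).1.eigenvalues i)) *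
    (star (Matrix.posSemidef_conjTranspose_mul_self A).1.eigenvectorUnitary :
      Matrix (Fin n) (Fin n) ℝ)).trace

/-- `IsMuonDir M D` says that `D = U * Vᵀ` where `M = U * S * Vᵀ` is a reduced singular value
decomposition of `M` (`U`, `V` with orthonormal columns, `S` diagonal with positive diagonal
entries, `r = rank M`). -/
def IsMuonDir {m n : ℕ} (M D : Matrix (Fin m) (Fin n) ℝ) : Prop :=
  ∃ (r : ℕ) (U : Matrix (Fin m) (Fin r) ℝ) (S : Matrix (Fin r) (Fin r) ℝ)
    (V : Matrix (Fin n) (Fin r) ℝ),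
      Uᵀ * U = 1 ∧ Vᵀ * V = 1 ∧ (∀ i j, i ≠ j → S i j = 0) ∧ (∀ i, 0 < S i i) ∧
      M = U * S * Vᵀ ∧ D = U * Vᵀ

/-- Matrices are measurable via the product σ-algebra on their entries. -/
instance matrixMeasurableSpace {m n : ℕ} : MeasurableSpace (Matrix (Fin m) (Fin n) ℝ) :=
  (inferInstance : MeasurableSpace (Fin m → Fin n → ℝ))

/-- A run of the FedMuon algorithm with `K` workers on `m × n` real matrix variables, over a
probability space `Ω`.  `f k` is the local loss of worker `k` and `grad k` its gradient;
`η` is the learning rate, `β` the momentum parameter, `τ` the communication period;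
`X t k`, `M t k`, `D t k` are the variable, momentum, and orthonormalized update direction of
worker `k` at iteration `t`, and `N t k` is the stochastic-gradient noise
(`∇f⁽ᵏ⁾(·;ξ) = ∇f⁽ᵏ⁾(·) + N`), with the noises independent across workers and iterations and
of mean zero (unbiased stochastic gradients). -/
structure FedMuon (m n K : ℕ) (Ω : Type) [MeasureSpace Ω] where
  f : Fin K → Matrix (Fin m) (Fin n) ℝ → ℝ
  grad : Fin K → Matrix (Fin m) (Fin n) ℝ → Matrix (Fin m) (Fin n) ℝ
  η : ℝ
  β : ℝ
  τ : ℕ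
  X0 : Matrix (Fin m) (Fin n) ℝ
  X : ℕ → Fin K → Ω → Matrix (Fin m) (Fin n) ℝ
  M : ℕ → Fin K → Ω → Matrix (Fin m) (Fin n) ℝ
  D : ℕ → Fin K → Ω → Matrix (Fin m) (Fin n) ℝ
  N : ℕ → Fin K → Ω → Matrix (Fin m) (Fin n) ℝ
  eta_pos : 0 < η
  beta_mem : β ∈ Set.Ioo (0 : ℝ) 1
  tau_gt_one : 1 < τ
  is_grad : ∀ k Y H,
    HasDerivAt (fun s : ℝ => f k (Y + s • H)) (∑ i, ∑ j, grad k Y i j * H i j) 0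
  init_X : ∀ k ω, X 0 k ω = X0
  init_M : ∀ k ω, M 0 k ω = grad k X0 + N 0 k ω
  muon_dir : ∀ t k ω, IsMuonDir (M t k ω) (D t k ω)
  step_X : ∀ t k ω, ¬ τ ∣ (t + 1) → X (t + 1) k ω = X t k ω - η • D t k ω
  step_X_comm : ∀ t k ω, τ ∣ (t + 1) →
    X (t + 1) k ω = (K : ℝ)⁻¹ • ∑ k', (X t k' ω - η • D t k' ω)
  step_M : ∀ t k ω, ¬ τ ∣ (t + 1) →
    M (t + 1) k ω = (1 - β) • M t k ω + β • (grad k (X t k ω - η • D t k ω) + N (t + 1) k ω)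
  step_M_comm : ∀ t k ω, τ ∣ (t + 1) →
    M (t + 1) k ω = (K : ℝ)⁻¹ •
      ∑ k', ((1 - β) • M t k' ω + β • (grad k' (X t k' ω - η • D t k' ω) + N (t + 1) k' ω))
  noise_meas : ∀ t k, Measurable (N t k)
  noise_indep : iIndepFun (fun p : ℕ × Fin K => N p.1 p.2) volume
  noise_mean : ∀ t k i j, ∫ ω, N t k ω i j = 0

variable {m n K : ℕ} {Ω : Type} [MeasureSpace Ω]

/-- The global loss `f = (1/K) ∑ₖ f⁽ᵏ⁾`. -/
def fbar (P : FedMuon m n K Ω) (Y : Matrix (Fin m) (Fin n) ℝ) : ℝ :=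
  (K : ℝ)⁻¹ * ∑ k, P.f k Y

/-- The global gradient `∇f = (1/K) ∑ₖ ∇f⁽ᵏ⁾`. -/
def gradbar (P : FedMuon m n K Ω) (Y : Matrix (Fin m) (Fin n) ℝ) : Matrix (Fin m) (Fin n) ℝ :=
  (K : ℝ)⁻¹ • ∑ k, P.grad k Y

/-- The averaged iterate `X̄ₜ = (1/K) ∑ₖ Xₜ⁽ᵏ⁾`. -/
def Xbar (P : FedMuon m n K Ω) (t : ℕ) (ω : Ω) : Matrix (Fin m) (Fin n) ℝ :=
  (K : ℝ)⁻¹ • ∑ k, P.X t k ω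

/-- The averaged momentum `M̄ₜ = (1/K) ∑ₖ Mₜ⁽ᵏ⁾`. -/
def Mbar (P : FedMuon m n K Ω) (t : ℕ) (ω : Ω) : Matrix (Fin m) (Fin n) ℝ :=
  (K : ℝ)⁻¹ • ∑ k, P.M t k ω

/-- Assumption 1: each local gradient is `L`-Lipschitz in the Frobenius norm. -/
def SmoothGrad (P : FedMuon m n K Ω) (L : ℝ) : Prop :=
  ∀ k Y Z, frob (P.grad k Y - P.grad k Z) ≤ L * frob (Y - Z)

/-- Assumption 2: the stochastic-gradient noise has variance at most `σ²`. -/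
def BoundedVariance (P : FedMuon m n K Ω) (σ : ℝ) : Prop :=
  ∀ t k, ∫ ω, frob (P.N t k ω) ^ 2 ≤ σ ^ 2

/-- Assumption 3: heavy-tailed noise, `E‖noise‖_F^p ≤ σ^p` with tail index `p`. -/
def HeavyTailedNoise (P : FedMuon m n K Ω) (p σ : ℝ) : Prop :=
  ∀ t k, ∫ ω, frob (P.N t k ω) ^ p ≤ σ ^ p

/-- Assumption 4: bounded heterogeneity `⟮1/K⟯ ∑ₖ ‖∇f⁽ᵏ⁾(X) − ∇f(X)‖_F² ≤ δ²`. -/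
def Heterogeneity (P : FedMuon m n K Ω) (δ : ℝ) : Prop :=
  ∀ Y, (K : ℝ)⁻¹ * ∑ k, frob (P.grad k Y - gradbar P Y) ^ 2 ≤ δ ^ 2



namespace FedMuonAux

def minner (A B : Matrix (Fin m) (Fin n) ℝ) : ℝ := ∑ i, ∑ j, A i j * B i j

lemma minner_self (A : Matrix (Fin m) (Fin n) ℝ) : minner A A = ∑ i, ∑ j, A i j ^ 2 := by
  simp [minner, sq]

lemma frob_nonneg (A : Matrix (Fin m) (Fin n) ℝ) : 0 ≤ frob A := Real.sqrt_nonneg _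

lemma sq_frob (A : Matrix (Fin m) (Fin n) ℝ) : frob A ^ 2 = minner A A := by
  rw [minner_self, frob, Real.sq_sqrt]; positivity

lemma minner_comm (A B : Matrix (Fin m) (Fin n) ℝ) : minner A B = minner B A := by
  simp [minner, mul_comm]

lemma minner_add_left (A B C : Matrix (Fin m) (Fin n) ℝ) :
    minner (A + B) C = minner A C + minner B C := by
  simp [minner, add_mul, Finset.sum_add_distrib]

lemma minner_sub_left (A B C : Matrix (Fin m) (Fin n) ℝ) :
    minner (A - B) C = minner A C - minner B C := by
  simp [minner, sub_mul, Finset.sum_sub_distrib]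

lemma minner_smul_left (c : ℝ) (A B : Matrix (Fin m) (Fin n) ℝ) :
    minner (c • A) B = c * minner A B := by
  simp [minner, Finset.mul_sum, mul_assoc]

lemma minner_smul_right (c : ℝ) (A B : Matrix (Fin m) (Fin n) ℝ) :
    minner A (c • B) = c * minner A B := by
  rw [minner_comm, minner_smul_left, minner_comm]

lemma minner_sum_left {ι : Type*} (s : Finset ι) (A : ι → Matrix (Fin m) (Fin n) ℝ)
    (B : Matrix (Fin m) (Fin n) ℝ) :
    minner (∑ k ∈ s, A k) B = ∑ k ∈ s, minner (A k) B := by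
  induction s using Finset.cons_induction with
  | empty => simp [minner]
  | cons a s ha ih => rw [Finset.sum_cons, Finset.sum_cons, minner_add_left, ih]

lemma minner_sum_right {ι : Type*} (s : Finset ι) (A : Matrix (Fin m) (Fin n) ℝ)
    (B : ι → Matrix (Fin m) (Fin n) ℝ) :
    minner A (∑ k ∈ s, B k) = ∑ k ∈ s, minner A (B k) := by
  rw [minner_comm, minner_sum_left]
  exact Finset.sum_congr rfl fun k _ => minner_comm _ _

lemma abs_minner_le (A B : Matrix (Fin m) (Fin n) ℝ) : |minner A B| ≤ frob A * frob B := by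
  have h := Finset.sum_mul_sq_le_sq_mul_sq Finset.univ
    (fun p : Fin m × Fin n => A p.1 p.2) (fun p : Fin m × Fin n => B p.1 p.2)
  have e1 : minner A B = ∑ p : Fin m × Fin n, A p.1 p.2 * B p.1 p.2 := by
    rw [minner, Fintype.sum_prod_type]
  have e2 : frob A = Real.sqrt (∑ p : Fin m × Fin n, A p.1 p.2 ^ 2) := by
    rw [frob, Fintype.sum_prod_type]
  have e3 : frob B = Real.sqrt (∑ p : Fin m × Fin n, B p.1 p.2 ^ 2) := by
    rw [frob, Fintype.sum_prod_type]
  calc |minner A B| = Real.sqrt ((∑ p : Fin m × Fin n, A p.1 p.2 * B p.1 p.2) ^ 2) := by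
        rw [Real.sqrt_sq_eq_abs, e1]
    _ ≤ Real.sqrt ((∑ p : Fin m × Fin n, A p.1 p.2 ^ 2) * ∑ p : Fin m × Fin n, B p.1 p.2 ^ 2) :=
        Real.sqrt_le_sqrt h
    _ = frob A * frob B := by
        rw [e2, e3, Real.sqrt_mul (by positivity)]

lemma minner_le (A B : Matrix (Fin m) (Fin n) ℝ) : minner A B ≤ frob A * frob B :=
  (le_abs_self _).trans (abs_minner_le A B)

lemma neg_le_minner (A B : Matrix (Fin m) (Fin n) ℝ) : -(frob A * frob B) ≤ minner A B :=
  neg_le_of_abs_le (abs_minner_le A B)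

lemma minner_add_right (A B C : Matrix (Fin m) (Fin n) ℝ) :
    minner A (B + C) = minner A B + minner A C := by
  rw [minner_comm, minner_add_left, minner_comm B, minner_comm C]

lemma frob_add_le (A B : Matrix (Fin m) (Fin n) ℝ) : frob (A + B) ≤ frob A + frob B := by
  have h : frob (A + B) ^ 2 ≤ (frob A + frob B) ^ 2 := by
    rw [sq_frob, minner_add_left, minner_add_right, minner_add_right]
    nlinarith [minner_le A B, sq_frob A, sq_frob B, minner_comm B A, frob_nonneg A, frob_nonneg B]
  nlinarith [frob_nonneg (A + B), frob_nonneg A, frob_nonneg B]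

lemma frob_zero : frob (0 : Matrix (Fin m) (Fin n) ℝ) = 0 := by simp [frob]

lemma frob_smul (c : ℝ) (A : Matrix (Fin m) (Fin n) ℝ) : frob (c • A) = |c| * frob A := by
  rw [frob, frob]
  have : ∀ i j, (c • A) i j ^ 2 = c ^ 2 * A i j ^ 2 := by
    intro i j; simp [Matrix.smul_apply, smul_eq_mul]; ring
  simp_rw [this, ← Finset.mul_sum]
  rw [Real.sqrt_mul (sq_nonneg c), Real.sqrt_sq_eq_abs]

lemma frob_sum_le {ι : Type*} (s : Finset ι) (A : ι → Matrix (Fin m) (Fin n) ℝ) :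
    frob (∑ k ∈ s, A k) ≤ ∑ k ∈ s, frob (A k) := by
  induction s using Finset.cons_induction with
  | empty => simp [frob_zero]
  | cons a s ha ih =>
    rw [Finset.sum_cons, Finset.sum_cons]
    exact (frob_add_le _ _).trans (by linarith)

lemma frob_le_sqrtn_mul (A : Matrix (Fin m) (Fin n) ℝ) : frob A ≤ Real.sqrt n * frob A := by
  rcases Nat.eq_zero_or_pos n with h | h
  · subst h; simp [frob]
  · have h1 : (1 : ℝ) ≤ Real.sqrt n := by
      rw [show (1:ℝ) = Real.sqrt 1 by simp]
      exact Real.sqrt_le_sqrt (by exact_mod_cast h)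
    nlinarith [frob_nonneg A]

lemma minner_eq_trace (A B : Matrix (Fin m) (Fin n) ℝ) :
    minner A B = Matrix.trace (Aᵀ * B) := by
  simp only [minner, Matrix.trace, Matrix.diag_apply, Matrix.mul_apply, Matrix.transpose_apply]
  exact Finset.sum_comm

lemma muon_facts {M D : Matrix (Fin m) (Fin n) ℝ} (h : IsMuonDir M D) :
    frob M ≤ minner M D ∧ frob D ≤ Real.sqrt n := by
  obtain ⟨r, U, S, V, hU, hV, hSo, hSp, hM, hD⟩ := h
  have hMt : Mᵀ = V * (Sᵀ * Uᵀ) := by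
    rw [hM, Matrix.transpose_mul, Matrix.transpose_mul, Matrix.transpose_transpose]
  have hDt : Dᵀ = V * Uᵀ := by
    rw [hD, Matrix.transpose_mul, Matrix.transpose_transpose]
  have eMD : Mᵀ * D = V * (Sᵀ * Vᵀ) := by
    rw [hMt, hD]
    simp only [Matrix.mul_assoc]
    rw [← Matrix.mul_assoc Uᵀ U, hU, Matrix.one_mul]
  have hMD : Matrix.trace (Mᵀ * D) = ∑ i, S i i := by
    rw [eMD, Matrix.trace_mul_comm, Matrix.mul_assoc, hV, Matrix.mul_one,
      Matrix.trace_transpose]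
    rfl
  have eMM : Mᵀ * M = V * (Sᵀ * (S * Vᵀ)) := by
    rw [hMt, hM]
    simp only [Matrix.mul_assoc]
    rw [← Matrix.mul_assoc Uᵀ U, hU, Matrix.one_mul]
  have hMM : Matrix.trace (Mᵀ * M) = ∑ i, S i i ^ 2 := by
    rw [eMM, Matrix.trace_mul_comm]
    simp only [Matrix.mul_assoc]
    rw [hV, Matrix.mul_one]
    simp only [Matrix.trace, Matrix.diag_apply, Matrix.mul_apply, Matrix.transpose_apply]
    refine Finset.sum_congr rfl fun i _ => ?_
    rw [Finset.sum_eq_single i (fun j _ hj => by rw [hSo j i hj, mul_zero]) (by simp), sq]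
  have eDD : Dᵀ * D = V * Vᵀ := by
    rw [hDt, hD]
    simp only [Matrix.mul_assoc]
    rw [← Matrix.mul_assoc Uᵀ U, hU, Matrix.one_mul]
  have hDD : Matrix.trace (Dᵀ * D) = (r : ℝ) := by
    rw [eDD, Matrix.trace_mul_comm, hV, Matrix.trace_one]
    simp

  have hrn : (r : ℝ) ≤ (n : ℝ) := by
    have h1 : (1 : Matrix (Fin r) (Fin r) ℝ).rank = r := by
      rw [Matrix.rank_one, Fintype.card_fin]
    have h2 : (Vᵀ * V).rank ≤ V.rank := Matrix.rank_mul_le_right _ _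
    have h3 : V.rank ≤ n := Matrix.rank_le_height V
    rw [hV] at h2
    exact_mod_cast h1 ▸ (h2.trans h3)
  constructor
  · have h1 : frob M = Real.sqrt (∑ i, S i i ^ 2) := by
      rw [← Real.sqrt_sq (frob_nonneg M), sq_frob, minner_eq_trace, hMM]
    rw [h1, minner_eq_trace, hMD]
    have h2 : ∑ i, S i i ^ 2 ≤ (∑ i, S i i) ^ 2 :=
      Finset.sum_sq_le_sq_sum_of_nonneg fun i _ => (hSp i).le
    calc Real.sqrt (∑ i, S i i ^ 2) ≤ Real.sqrt ((∑ i, S i i) ^ 2) := Real.sqrt_le_sqrt h2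
      _ = ∑ i, S i i := Real.sqrt_sq (Finset.sum_nonneg fun i _ => (hSp i).le)
  · have h1 : frob D = Real.sqrt r := by
      rw [← Real.sqrt_sq (frob_nonneg D), sq_frob, minner_eq_trace, hDD]
    rw [h1]
    exact Real.sqrt_le_sqrt hrn

lemma descent {f : Matrix (Fin m) (Fin n) ℝ → ℝ} {g : Matrix (Fin m) (Fin n) ℝ → Matrix (Fin m) (Fin n) ℝ}
    {L : ℝ} (hL : 0 ≤ L)
    (hgrad : ∀ Y H, HasDerivAt (fun s : ℝ => f (Y + s • H)) (minner (g Y) H) 0)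
    (hlip : ∀ Y Z, frob (g Y - g Z) ≤ L * frob (Y - Z))
    (X H : Matrix (Fin m) (Fin n) ℝ) :
    f (X + H) ≤ f X + minner (g X) H + L / 2 * frob H ^ 2 := by
  have hg : ∀ s : ℝ, HasDerivAt (fun u : ℝ => f (X + u • H)) (minner (g (X + s • H)) H) s := by
    intro s
    have h0 := hgrad (X + s • H) H
    have h1 : HasDerivAt (fun u : ℝ => u - s) 1 s := by
      simpa using (hasDerivAt_id s).sub_const s
    have h1' : (fun u : ℝ => u - s) s = 0 := by simp
    have comp := HasDerivAt.comp s (h1' ▸ h0) h1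
    have key : ∀ u : ℝ, X + s • H + (u - s) • H = X + u • H := by
      intro u; rw [sub_smul]; abel
    have : (fun u : ℝ => f (X + s • H + u • H)) ∘ (fun u : ℝ => u - s)
        = fun u : ℝ => f (X + u • H) := by
      funext u; simp [Function.comp, key u]
    rw [this, mul_one] at comp
    exact comp
  set c := minner (g X) H with hc
  set b := L / 2 * frob H ^ 2 with hb
  set φ : ℝ → ℝ := fun s => f X + s * c + b * s ^ 2 - f (X + s • H) with hφ
  have hφd : ∀ s : ℝ, HasDerivAt φ (c + b * (2 * s) - minner (g (X + s • H)) H) s := by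
    intro s
    have h1 : HasDerivAt (fun s : ℝ => f X + s * c + b * s ^ 2) (c + b * (2 * s)) s := by
      have ha : HasDerivAt (fun s : ℝ => s * c) c s := by
        simpa using (hasDerivAt_id s).mul_const c
      have hb2 : HasDerivAt (fun s : ℝ => b * s ^ 2) (b * (2 * s)) s := by
        have := (hasDerivAt_pow 2 s).const_mul b
        simpa [mul_comm] using this
      have h := ((hasDerivAt_const s (f X)).add ha).add hb2
      rw [zero_add] at h
      exact h
    exact h1.sub (hg s)
  have hmono : MonotoneOn φ (Set.Icc (0:ℝ) 1) := by
    apply monotoneOn_of_deriv_nonneg (convex_Icc 0 1)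
    · exact fun x _ => (hφd x).continuousAt.continuousWithinAt
    · exact fun x _ => (hφd x).differentiableAt.differentiableWithinAt
    · intro s hs
      rw [interior_Icc] at hs
      rw [(hφd s).deriv]
      have hs0 : 0 ≤ s := hs.1.le
      have key : minner (g (X + s • H)) H - c ≤ L * frob H ^ 2 * s := by
        have e1 : minner (g (X + s • H)) H - c = minner (g (X + s • H) - g X) H := by
          rw [minner_sub_left]
        rw [e1]
        have e2 : frob (X + s • H - X) = s * frob H := by
          have : X + s • H - X = s • H := by abel
          rw [this, frob_smul, abs_of_nonneg hs0]
        calc minner (g (X + s • H) - g X) H ≤ frob (g (X + s • H) - g X) * frob H :=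
              minner_le _ _
          _ ≤ L * (s * frob H) * frob H := by
              have := hlip (X + s • H) X
              rw [e2] at this
              exact mul_le_mul_of_nonneg_right this (frob_nonneg H)
          _ = L * frob H ^ 2 * s := by ring
      have : b * (2 * s) = L * frob H ^ 2 * s := by rw [hb]; ring
      linarith
  have h01 := hmono (Set.left_mem_Icc.2 zero_le_one) (Set.right_mem_Icc.2 zero_le_one) zero_le_one
  have e0 : φ 0 = 0 := by simp [hφ]
  have e1 : φ 1 = f X + c + b - f (X + H) := by simp [hφ]
  rw [e0, e1] at h01
  rw [hb] at h01
  linarith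

end FedMuonAux

set_option maxHeartbeats 1000000 in
open FedMuonAux in
/-- **Lemma 3 of the paper** (loss function update): under L-smoothness, in every iteration of
FedMuon the global loss at the averaged iterate decreases up to consensus and gradient
estimation errors. -/
theorem fedmuon_loss_update
    (hK : 1 < K) (P : FedMuon m n K Ω) (L : ℝ) (hL : 0 < L)
    (hsmooth : SmoothGrad P L) (t : ℕ) (ω : Ω) :
    fbar P (Xbar P (t + 1) ω) ≤
      fbar P (Xbar P t ω) - P.η * frob (gradbar P (Xbar P t ω))
        + 2 * P.η * Real.sqrt n * ((K : ℝ)⁻¹ * ∑ k, frob (Mbar P t ω - P.M t k ω))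
        + 2 * P.η * Real.sqrt n * L * ((K : ℝ)⁻¹ * ∑ k, frob (Xbar P t ω - P.X t k ω))
        + 2 * P.η * Real.sqrt n *
            frob ((K : ℝ)⁻¹ • (∑ k, P.grad k (P.X t k ω)) - Mbar P t ω)
        + P.η ^ 2 * n * L / 2 := by
  have hKpos : (0:ℝ) < K := by exact_mod_cast Nat.lt_of_lt_of_le Nat.zero_lt_one hK.le
  have hKne : (K:ℝ) ≠ 0 := ne_of_gt hKpos
  have hKinv : (0:ℝ) ≤ (K:ℝ)⁻¹ := by positivity
  set sqn := Real.sqrt (n:ℝ) with hsqn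
  have hsqn0 : 0 ≤ sqn := Real.sqrt_nonneg _
  set Db : Matrix (Fin m) (Fin n) ℝ := (K:ℝ)⁻¹ • ∑ k, P.D t k ω with hDb
  set Gb : Matrix (Fin m) (Fin n) ℝ := (K:ℝ)⁻¹ • ∑ k, P.grad k (P.X t k ω) with hGb
  -- derivative of fbar
  have hgradbar : ∀ Y H : Matrix (Fin m) (Fin n) ℝ,
      HasDerivAt (fun s : ℝ => fbar P (Y + s • H)) (minner (gradbar P Y) H) 0 := by
    intro Y H
    have h := HasDerivAt.const_mul ((K:ℝ)⁻¹)
      (HasDerivAt.fun_sum (u := Finset.univ) (fun k _ => P.is_grad k Y H))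
    have e : minner (gradbar P Y) H
        = (K:ℝ)⁻¹ * ∑ k, (∑ i, ∑ j, P.grad k Y i j * H i j) := by
      rw [gradbar, minner_smul_left, minner_sum_left]
      rfl
    rw [e]
    exact h
  -- Lipschitz gradient of fbar
  have hlipbar : ∀ Y Z, frob (gradbar P Y - gradbar P Z) ≤ L * frob (Y - Z) := by
    intro Y Z
    have e : gradbar P Y - gradbar P Z = (K:ℝ)⁻¹ • ∑ k, (P.grad k Y - P.grad k Z) := by
      rw [gradbar, gradbar, ← smul_sub, ← Finset.sum_sub_distrib]
    rw [e, frob_smul, abs_of_nonneg hKinv]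
    calc (K:ℝ)⁻¹ * frob (∑ k, (P.grad k Y - P.grad k Z))
        ≤ (K:ℝ)⁻¹ * ∑ k, frob (P.grad k Y - P.grad k Z) :=
          mul_le_mul_of_nonneg_left (frob_sum_le _ _) hKinv
      _ ≤ (K:ℝ)⁻¹ * ∑ _k : Fin K, L * frob (Y - Z) :=
          mul_le_mul_of_nonneg_left (Finset.sum_le_sum fun k _ => hsmooth k Y Z) hKinv
      _ = L * frob (Y - Z) := by
          rw [Finset.sum_const, Finset.card_univ, Fintype.card_fin, nsmul_eq_mul]
          field_simp
  -- step equation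
  have hsum : ∑ k, P.X (t+1) k ω = ∑ k, (P.X t k ω - P.η • P.D t k ω) := by
    by_cases hd : P.τ ∣ (t+1)
    · rw [Finset.sum_congr rfl (fun k _ => P.step_X_comm t k ω hd), Finset.sum_const,
        Finset.card_univ, Fintype.card_fin, ← Nat.cast_smul_eq_nsmul ℝ, smul_smul,
        mul_inv_cancel₀ hKne, one_smul]
    · exact Finset.sum_congr rfl fun k _ => P.step_X t k ω hd
  have hstep : Xbar P (t+1) ω = Xbar P t ω + (-P.η) • Db := by
    simp only [Xbar]
    rw [hsum, Finset.sum_sub_distrib, hDb, ← Finset.smul_sum]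
    module
  -- descent
  have hdesc := descent (f := fbar P) (g := gradbar P) hL.le hgradbar hlipbar
    (Xbar P t ω) ((-P.η) • Db)
  rw [← hstep] at hdesc
  -- per-worker lower bound on the inner product
  have perk : ∀ k : Fin K,
      frob (gradbar P (Xbar P t ω))
        - 2 * sqn * frob (gradbar P (Xbar P t ω) - P.M t k ω)
      ≤ minner (gradbar P (Xbar P t ω)) (P.D t k ω) := by
    intro k
    obtain ⟨hm1, hm2⟩ := muon_facts (P.muon_dir t k ω)
    set G := gradbar P (Xbar P t ω) with hG
    set Mk := P.M t k ω with hMk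
    set Dk := P.D t k ω with hDk
    have hsplit : minner G Dk = minner Mk Dk + minner (G - Mk) Dk := by
      rw [← minner_add_left]
      congr 1
      abel
    have h1 : frob G ≤ frob Mk + frob (G - Mk) := by
      have e : Mk + (G - Mk) = G := by abel
      calc frob G = frob (Mk + (G - Mk)) := by rw [e]
        _ ≤ _ := frob_add_le _ _
    have h3 : -(sqn * frob (G - Mk)) ≤ minner (G - Mk) Dk := by
      have ha := neg_le_minner (G - Mk) Dk
      have h4 : frob (G - Mk) * frob Dk ≤ frob (G - Mk) * sqn :=
        mul_le_mul_of_nonneg_left hm2 (frob_nonneg _)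
      nlinarith
    have h5 : frob (G - Mk) ≤ sqn * frob (G - Mk) := frob_le_sqrtn_mul _
    linarith
  -- averaged lower bound
  have hcore : frob (gradbar P (Xbar P t ω))
      - 2 * sqn * ((K:ℝ)⁻¹ * ∑ k, frob (gradbar P (Xbar P t ω) - P.M t k ω))
      ≤ minner (gradbar P (Xbar P t ω)) Db := by
    have hsumle := Finset.sum_le_sum (fun k (_ : k ∈ Finset.univ) => perk k)
    have e1 : minner (gradbar P (Xbar P t ω)) Db
        = (K:ℝ)⁻¹ * ∑ k, minner (gradbar P (Xbar P t ω)) (P.D t k ω) := by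
      rw [hDb, minner_smul_right, minner_sum_right]
    have e2 : ∑ k : Fin K, (frob (gradbar P (Xbar P t ω))
          - 2 * sqn * frob (gradbar P (Xbar P t ω) - P.M t k ω))
        = (K:ℝ) * frob (gradbar P (Xbar P t ω))
          - 2 * sqn * ∑ k, frob (gradbar P (Xbar P t ω) - P.M t k ω) := by
      rw [Finset.sum_sub_distrib, Finset.sum_const, Finset.card_univ, Fintype.card_fin,
        nsmul_eq_mul, ← Finset.mul_sum]
    have h := mul_le_mul_of_nonneg_left hsumle hKinv
    rw [e2] at h
    rw [e1]
    have e3 : frob (gradbar P (Xbar P t ω))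
        - 2 * sqn * ((K:ℝ)⁻¹ * ∑ k, frob (gradbar P (Xbar P t ω) - P.M t k ω))
        = (K:ℝ)⁻¹ * ((K:ℝ) * frob (gradbar P (Xbar P t ω))
          - 2 * sqn * ∑ k, frob (gradbar P (Xbar P t ω) - P.M t k ω)) := by
      field_simp
    rw [e3]
    exact h
  -- bound on gradient mismatch
  have hGGb : frob (gradbar P (Xbar P t ω) - Gb)
      ≤ L * ((K:ℝ)⁻¹ * ∑ k, frob (Xbar P t ω - P.X t k ω)) := by
    have e : gradbar P (Xbar P t ω) - Gb
        = (K:ℝ)⁻¹ • ∑ k, (P.grad k (Xbar P t ω) - P.grad k (P.X t k ω)) := by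
      rw [gradbar, hGb, ← smul_sub, ← Finset.sum_sub_distrib]
    rw [e, frob_smul, abs_of_nonneg hKinv]
    calc (K:ℝ)⁻¹ * frob (∑ k, (P.grad k (Xbar P t ω) - P.grad k (P.X t k ω)))
        ≤ (K:ℝ)⁻¹ * ∑ k, frob (P.grad k (Xbar P t ω) - P.grad k (P.X t k ω)) :=
          mul_le_mul_of_nonneg_left (frob_sum_le _ _) hKinv
      _ ≤ (K:ℝ)⁻¹ * ∑ k, L * frob (Xbar P t ω - P.X t k ω) :=
          mul_le_mul_of_nonneg_left (Finset.sum_le_sum fun k _ => hsmooth k _ _) hKinv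
      _ = L * ((K:ℝ)⁻¹ * ∑ k, frob (Xbar P t ω - P.X t k ω)) := by
          rw [← Finset.mul_sum]
          ring
  -- bound on the average momentum error
  have hE : (K:ℝ)⁻¹ * ∑ k, frob (gradbar P (Xbar P t ω) - P.M t k ω)
      ≤ L * ((K:ℝ)⁻¹ * ∑ k, frob (Xbar P t ω - P.X t k ω))
        + frob (Gb - Mbar P t ω)
        + (K:ℝ)⁻¹ * ∑ k, frob (Mbar P t ω - P.M t k ω) := by
    have perE : ∀ k : Fin K, frob (gradbar P (Xbar P t ω) - P.M t k ω)
        ≤ frob (gradbar P (Xbar P t ω) - Gb) + frob (Gb - Mbar P t ω)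
          + frob (Mbar P t ω - P.M t k ω) := by
      intro k
      have e : gradbar P (Xbar P t ω) - P.M t k ω
          = (gradbar P (Xbar P t ω) - Gb)
            + ((Gb - Mbar P t ω) + (Mbar P t ω - P.M t k ω)) := by abel
      rw [e]
      have h1 := frob_add_le (gradbar P (Xbar P t ω) - Gb)
        ((Gb - Mbar P t ω) + (Mbar P t ω - P.M t k ω))
      have h2 := frob_add_le (Gb - Mbar P t ω) (Mbar P t ω - P.M t k ω)
      linarith
    have hsum2 := Finset.sum_le_sum (fun k (_ : k ∈ Finset.univ) => perE k)
    have h := mul_le_mul_of_nonneg_left hsum2 hKinv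
    have e2 : (K:ℝ)⁻¹ * ∑ k : Fin K, (frob (gradbar P (Xbar P t ω) - Gb)
          + frob (Gb - Mbar P t ω) + frob (Mbar P t ω - P.M t k ω))
        = frob (gradbar P (Xbar P t ω) - Gb) + frob (Gb - Mbar P t ω)
          + (K:ℝ)⁻¹ * ∑ k, frob (Mbar P t ω - P.M t k ω) := by
      rw [Finset.sum_add_distrib, Finset.sum_add_distrib, Finset.sum_const,
        Finset.card_univ, Fintype.card_fin, nsmul_eq_mul, Finset.sum_const,
        Finset.card_univ, Fintype.card_fin, nsmul_eq_mul]
      field_simp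
    rw [e2] at h
    linarith
  -- bound on the update magnitude
  have hDbfrob : frob Db ≤ sqn := by
    rw [hDb]
    calc frob ((K:ℝ)⁻¹ • ∑ k, P.D t k ω)
        = (K:ℝ)⁻¹ * frob (∑ k, P.D t k ω) := by rw [frob_smul, abs_of_nonneg hKinv]
      _ ≤ (K:ℝ)⁻¹ * ∑ k, frob (P.D t k ω) :=
          mul_le_mul_of_nonneg_left (frob_sum_le _ _) hKinv
      _ ≤ (K:ℝ)⁻¹ * ∑ _k : Fin K, sqn :=
          mul_le_mul_of_nonneg_left
            (Finset.sum_le_sum fun k _ => (muon_facts (P.muon_dir t k ω)).2) hKinv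
      _ = sqn := by
          rw [Finset.sum_const, Finset.card_univ, Fintype.card_fin, nsmul_eq_mul]
          field_simp
  have hH2 : frob ((-P.η) • Db) ^ 2 ≤ P.η ^ 2 * (n:ℝ) := by
    rw [frob_smul, abs_neg, abs_of_nonneg P.eta_pos.le]
    have h1 : P.η * frob Db ≤ P.η * sqn :=
      mul_le_mul_of_nonneg_left hDbfrob P.eta_pos.le
    have h2 : (P.η * frob Db) ^ 2 ≤ (P.η * sqn) ^ 2 :=
      pow_le_pow_left₀ (mul_nonneg P.eta_pos.le (frob_nonneg _)) h1 2
    have h3 : (P.η * sqn) ^ 2 = P.η ^ 2 * (n:ℝ) := by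
      rw [mul_pow, hsqn, Real.sq_sqrt (Nat.cast_nonneg n)]
    linarith
  -- final assembly
  have m1 : minner (gradbar P (Xbar P t ω)) ((-P.η) • Db)
      = -(P.η * minner (gradbar P (Xbar P t ω)) Db) := by
    rw [minner_smul_right]
    ring
  have m2 := mul_le_mul_of_nonneg_left hcore P.eta_pos.le
  have hc : (0:ℝ) ≤ 2 * P.η * sqn := by nlinarith [P.eta_pos, hsqn0]
  have m3 := mul_le_mul_of_nonneg_left hE hc
  have m4 := mul_le_mul_of_nonneg_left hH2 (show (0:ℝ) ≤ L / 2 by positivity)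
  rw [m1] at hdesc
  linarith [hdesc, m2, m3, m4]

end
end

section
/- (Intermediate one-step descent inequality for FedMuon.) Under Assumption 1 (L-smoothness), for every iteration t of FedMuon it holds that f(X̄_{t+1}) ≤ f(X̄_t) − η·(1/K)∑_{k=1}^K ‖M_t^{(k)}‖_* + η√n·‖∇f(X̄_t) − M̄_t‖_F + η√n·(1/K)∑_{k=1}^K ‖M̄_t − M_t^{(k)}‖_F + η²nL/2. -/
open MeasureTheory ProbabilityTheory Matrix Finset

noncomputable section

variable {m n K : ℕ} {Ω : Type} [MeasureSpace Ω]

namespace FMaux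
variable {m n : ℕ}

/-- entrywise inner product -/
def ip (A B : Matrix (Fin m) (Fin n) ℝ) : ℝ := ∑ i, ∑ j, A i j * B i j

def toE (A : Matrix (Fin m) (Fin n) ℝ) : EuclideanSpace ℝ (Fin m × Fin n) :=
  WithLp.toLp 2 (fun p : Fin m × Fin n => A p.1 p.2)

lemma frob_eq_norm (A : Matrix (Fin m) (Fin n) ℝ) : frob A = ‖toE A‖ := by
  rw [EuclideanSpace.norm_eq, frob]
  congr 1
  rw [Fintype.sum_prod_type]
  simp [toE, sq_abs]

lemma ip_eq_inner (A B : Matrix (Fin m) (Fin n) ℝ) :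
    ip A B = inner (𝕜 := ℝ) (toE A) (toE B) := by
  rw [PiLp.inner_apply, ip, Fintype.sum_prod_type]
  simp [toE, RCLike.inner_apply, mul_comm]

lemma toE_sum {ι : Type*} (s : Finset ι) (A : ι → Matrix (Fin m) (Fin n) ℝ) :
    toE (∑ k ∈ s, A k) = ∑ k ∈ s, toE (A k) := by
  ext p
  simp [toE, Matrix.sum_apply]

lemma toE_smul (c : ℝ) (A : Matrix (Fin m) (Fin n) ℝ) : toE (c • A) = c • toE A := by
  ext p; simp [toE]

lemma frob_nonneg (A : Matrix (Fin m) (Fin n) ℝ) : 0 ≤ frob A := Real.sqrt_nonneg _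

lemma frob_smul (c : ℝ) (A : Matrix (Fin m) (Fin n) ℝ) : frob (c • A) = |c| * frob A := by
  rw [frob_eq_norm, toE_smul, norm_smul, frob_eq_norm, Real.norm_eq_abs]

lemma frob_sum_le {ι : Type*} (s : Finset ι) (A : ι → Matrix (Fin m) (Fin n) ℝ) :
    frob (∑ k ∈ s, A k) ≤ ∑ k ∈ s, frob (A k) := by
  rw [frob_eq_norm, toE_sum]
  exact (norm_sum_le s fun k => toE (A k)).trans (le_of_eq (by simp [frob_eq_norm]))

lemma ip_le (A B : Matrix (Fin m) (Fin n) ℝ) : ip A B ≤ frob A * frob B := by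
  rw [ip_eq_inner, frob_eq_norm, frob_eq_norm]; exact real_inner_le_norm _ _

lemma neg_le_ip (A B : Matrix (Fin m) (Fin n) ℝ) : -(frob A * frob B) ≤ ip A B := by
  have := ip_le (-A) B
  have h2 : ip (-A) B = -ip A B := by simp [ip]
  have h3 : frob (-A) = frob A := by
    have := frob_smul (-1 : ℝ) A; simpa using this
  rw [h2, h3] at this; linarith

lemma ip_sub_left (A B C : Matrix (Fin m) (Fin n) ℝ) : ip (A - B) C = ip A C - ip B C := by
  simp [ip, sub_mul, Finset.sum_sub_distrib]

lemma ip_add_left (A B C : Matrix (Fin m) (Fin n) ℝ) : ip (A + B) C = ip A C + ip B C := by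
  simp [ip, add_mul, Finset.sum_add_distrib]

lemma ip_smul_left (c : ℝ) (A B : Matrix (Fin m) (Fin n) ℝ) : ip (c • A) B = c * ip A B := by
  simp [ip, Finset.mul_sum, mul_assoc]

lemma ip_smul_right (c : ℝ) (A B : Matrix (Fin m) (Fin n) ℝ) : ip A (c • B) = c * ip A B := by
  simp [ip, Finset.mul_sum]; congr 1; funext i; congr 1; funext j; ring

lemma ip_zero_left (B : Matrix (Fin m) (Fin n) ℝ) : ip 0 B = 0 := by simp [ip]

lemma ip_zero_right (A : Matrix (Fin m) (Fin n) ℝ) : ip A 0 = 0 := by simp [ip]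

lemma ip_add_right (A B C : Matrix (Fin m) (Fin n) ℝ) : ip A (B + C) = ip A B + ip A C := by
  simp [ip, mul_add, Finset.sum_add_distrib]

lemma ip_sum_left {ι : Type*} (s : Finset ι) (A : ι → Matrix (Fin m) (Fin n) ℝ)
    (B : Matrix (Fin m) (Fin n) ℝ) : ip (∑ k ∈ s, A k) B = ∑ k ∈ s, ip (A k) B := by
  classical
  induction s using Finset.induction_on with
  | empty => simp [ip_zero_left]
  | insert _ _ h ih => rw [Finset.sum_insert h, Finset.sum_insert h, ip_add_left, ih]

lemma ip_sum_right {ι : Type*} (s : Finset ι) (A : Matrix (Fin m) (Fin n) ℝ)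
    (B : ι → Matrix (Fin m) (Fin n) ℝ) : ip A (∑ k ∈ s, B k) = ∑ k ∈ s, ip A (B k) := by
  classical
  induction s using Finset.induction_on with
  | empty => simp [ip_zero_right]
  | insert _ _ h ih => rw [Finset.sum_insert h, Finset.sum_insert h, ip_add_right, ih]

lemma frob_sq (A : Matrix (Fin m) (Fin n) ℝ) : frob A ^ 2 = ip A A := by
  rw [frob, Real.sq_sqrt (by positivity), ip]; simp [sq]

lemma ip_eq_trace (A B : Matrix (Fin m) (Fin n) ℝ) : ip A B = (Aᵀ * B).trace := by
  simp [ip, Matrix.trace, Matrix.diag, Matrix.mul_apply, Matrix.transpose_apply]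
  rw [Finset.sum_comm]


lemma hasDerivAt_shift {f : Matrix (Fin m) (Fin n) ℝ → ℝ}
    {g : Matrix (Fin m) (Fin n) ℝ → Matrix (Fin m) (Fin n) ℝ}
    (hd : ∀ Y H, HasDerivAt (fun s : ℝ => f (Y + s • H)) (ip (g Y) H) 0)
    (Y H : Matrix (Fin m) (Fin n) ℝ) (s : ℝ) :
    HasDerivAt (fun x : ℝ => f (Y + x • H)) (ip (g (Y + s • H)) H) s := by
  have hF := hd (Y + s • H) H
  have hin : HasDerivAt (fun x : ℝ => x - s) 1 s := by
    simpa using (hasDerivAt_id s).sub_const s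
  have hF' : HasDerivAt (fun u : ℝ => f (Y + s • H + u • H)) (ip (g (Y + s • H)) H) (s - s) := by
    simpa using hF
  have hcomp := hF'.comp_sub_const s s
  have : (fun x : ℝ => f (Y + s • H + (x - s) • H)) = fun x : ℝ => f (Y + x • H) := by
    funext x
    congr 1
    rw [sub_smul]
    abel
  simpa [Function.comp, this, mul_one] using hcomp

/-- Descent lemma. -/
lemma descent {f : Matrix (Fin m) (Fin n) ℝ → ℝ}
    {g : Matrix (Fin m) (Fin n) ℝ → Matrix (Fin m) (Fin n) ℝ} {L : ℝ} (hL : 0 ≤ L)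
    (hd : ∀ Y H, HasDerivAt (fun s : ℝ => f (Y + s • H)) (ip (g Y) H) 0)
    (hlip : ∀ Y Z, frob (g Y - g Z) ≤ L * frob (Y - Z))
    (Y H : Matrix (Fin m) (Fin n) ℝ) :
    f (Y + H) ≤ f Y + ip (g Y) H + L / 2 * frob H ^ 2 := by
  set φ : ℝ → ℝ := fun s => f (Y + s • H) - s * ip (g Y) H - L / 2 * s ^ 2 * frob H ^ 2 with hφ
  have hder : ∀ s : ℝ, HasDerivAt φ
      (ip (g (Y + s • H)) H - ip (g Y) H - L * s * frob H ^ 2) s := by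
    intro s
    have h1 := hasDerivAt_shift hd Y H s
    have h2 : HasDerivAt (fun x : ℝ => x * ip (g Y) H) (ip (g Y) H) s := by
      simpa using (hasDerivAt_id s).mul_const (ip (g Y) H)
    have h3 : HasDerivAt (fun x : ℝ => L / 2 * x ^ 2 * frob H ^ 2)
        (L * s * frob H ^ 2) s := by
      have : HasDerivAt (fun x : ℝ => x ^ 2) (2 * s) s := by
        simpa using hasDerivAt_pow 2 s
      have := (this.const_mul (L / 2)).mul_const (frob H ^ 2)
      exact this.congr_deriv (by ring)
    simpa [hφ] using (h1.fun_sub h2).fun_sub h3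
  have hderneg : ∀ s ∈ interior (Set.Icc (0:ℝ) 1), deriv φ s ≤ 0 := by
    intro s hs
    rw [interior_Icc] at hs
    rw [(hder s).deriv]
    have key : ip (g (Y + s • H)) H - ip (g Y) H ≤ L * s * frob H ^ 2 := by
      rw [← ip_sub_left]
      calc ip (g (Y + s • H) - g Y) H ≤ frob (g (Y + s • H) - g Y) * frob H := ip_le _ _
        _ ≤ (L * frob (Y + s • H - Y)) * frob H := by
            have := hlip (Y + s • H) Y
            exact mul_le_mul_of_nonneg_right this (frob_nonneg H)
        _ = L * s * frob H ^ 2 := by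
            have : Y + s • H - Y = s • H := by abel
            rw [this, frob_smul, abs_of_nonneg hs.1.le]
            ring
    linarith
  have hdiff : ∀ s : ℝ, DifferentiableAt ℝ φ s := fun s => (hder s).differentiableAt
  have hanti : AntitoneOn φ (Set.Icc (0:ℝ) 1) :=
    antitoneOn_of_deriv_nonpos (convex_Icc 0 1)
      (fun s _ => (hdiff s).continuousAt.continuousWithinAt)
      (fun s _ => (hdiff s).differentiableWithinAt) hderneg
  have h01 : φ 1 ≤ φ 0 := hanti (Set.left_mem_Icc.2 zero_le_one)
      (Set.right_mem_Icc.2 zero_le_one) zero_le_one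
  have hφ0 : φ 0 = f Y := by simp [hφ]
  have hφ1 : φ 1 = f (Y + H) - ip (g Y) H - L / 2 * frob H ^ 2 := by simp [hφ]
  rw [hφ0, hφ1] at h01
  linarith


lemma muon_key {M D : Matrix (Fin m) (Fin n) ℝ}
    (r : ℕ) (U : Matrix (Fin m) (Fin r) ℝ) (S : Matrix (Fin r) (Fin r) ℝ)
    (V : Matrix (Fin n) (Fin r) ℝ)
    (hU : Uᵀ * U = 1) (hV : Vᵀ * V = 1) (hoff : ∀ i j, i ≠ j → S i j = 0)
    (hpos : ∀ i, 0 < S i i) (hM : M = U * S * Vᵀ) (hD : D = U * Vᵀ) :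
    ip M D = nuclearNorm M ∧ frob D ≤ Real.sqrt n := by
  have hUX : ∀ {p : ℕ} (X : Matrix (Fin r) (Fin p) ℝ), Uᵀ * (U * X) = X := by
    intro p X; rw [← Matrix.mul_assoc, hU, Matrix.one_mul]
  have hVX : ∀ {p : ℕ} (X : Matrix (Fin r) (Fin p) ℝ), Vᵀ * (V * X) = X := by
    intro p X; rw [← Matrix.mul_assoc, hV, Matrix.one_mul]
  have hSdiag : S = Matrix.diagonal (fun i => S i i) := by
    ext i j
    by_cases h : i = j
    · subst h; simp
    · simp [Matrix.diagonal_apply_ne _ h, hoff i j h]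
  have hSt : Sᵀ = S := by
    ext i j
    by_cases h : i = j
    · subst h; simp
    · simp [Matrix.transpose_apply, hoff i j h, hoff j i (Ne.symm h)]
  set B : Matrix (Fin n) (Fin n) ℝ := V * S * Vᵀ with hB
  have hBpsd : B.PosSemidef := by
    have hd : (Matrix.diagonal (fun i => S i i)).PosSemidef :=
      Matrix.posSemidef_diagonal_iff.mpr fun i => (hpos i).le
    have h2 := hd.mul_mul_conjTranspose_same V
    rwa [Matrix.conjTranspose_eq_transpose_of_trivial, ← hSdiag] at h2
  have hMt : Mᵀ = V * S * Uᵀ := by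
    rw [hM, Matrix.transpose_mul, Matrix.transpose_mul, Matrix.transpose_transpose, hSt,
      Matrix.mul_assoc]
  have hMtM : Mᵀ * M = B ^ 2 := by
    rw [hMt, hM, hB, pow_two]
    rw [Matrix.mul_assoc (V * S), Matrix.mul_assoc (V * S), Matrix.mul_assoc U,
      hUX, Matrix.mul_assoc V S Vᵀ, hVX]
  have hsqrt : (Matrix.posSemidef_conjTranspose_mul_self M).1.eigenvectorUnitary.1 *
      diagonal (fun i => Real.sqrt ((Matrix.posSemidef_conjTranspose_mul_self M).1.eigenvalues i)) *
      (star (Matrix.posSemidef_conjTranspose_mul_self M).1.eigenvectorUnitary :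
        Matrix (Fin n) (Fin n) ℝ) = B := by
    open scoped MatrixOrder in
    have h1 : CFC.sqrt (Mᴴ * M) =
        (Matrix.posSemidef_conjTranspose_mul_self M).1.eigenvectorUnitary.1 *
        diagonal (fun i => Real.sqrt ((Matrix.posSemidef_conjTranspose_mul_self M).1.eigenvalues i)) *
        (star (Matrix.posSemidef_conjTranspose_mul_self M).1.eigenvectorUnitary :
          Matrix (Fin n) (Fin n) ℝ) := by
      rw [CFC.sqrt_eq_cfc, cfc_nnreal_eq_real _ (Mᴴ * M) (Matrix.posSemidef_conjTranspose_mul_self M).nonneg,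
        (Matrix.posSemidef_conjTranspose_mul_self M).1.cfc_eq]
      simp only [Matrix.IsHermitian.cfc, Unitary.conjStarAlgAut_apply, Real.coe_sqrt,
        Real.coe_toNNReal']
      congr 3
      funext i
      exact congrArg Real.sqrt
        (max_eq_left ((Matrix.posSemidef_conjTranspose_mul_self M).eigenvalues_nonneg i))
    open scoped MatrixOrder in
    rw [← h1, Matrix.conjTranspose_eq_transpose_of_trivial, hMtM]
    open scoped MatrixOrder in
    exact CFC.sqrt_sq B hBpsd.nonneg
  have htraceB : B.trace = S.trace := by
    rw [hB, Matrix.trace_mul_cycle, hV, Matrix.one_mul]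
  constructor
  · rw [ip_eq_trace, hMt, hD, nuclearNorm, hsqrt, htraceB,
      Matrix.mul_assoc (V * S), hUX, Matrix.trace_mul_cycle, hV, Matrix.one_mul]
  · have hfd : frob D ^ 2 = (r : ℝ) := by
      rw [frob_sq, ip_eq_trace, hD, Matrix.transpose_mul, Matrix.transpose_transpose,
        Matrix.mul_assoc V, hUX, Matrix.trace_mul_comm, hV, Matrix.trace_one]
      simp
    have hrn : r ≤ n := by
      have hinj : Function.Injective (Matrix.mulVecLin V) := by
        intro x y hxy
        have h1 : Vᵀ *ᵥ (V *ᵥ x) = Vᵀ *ᵥ (V *ᵥ y) := by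
          simp only [Matrix.mulVecLin_apply] at hxy
          rw [hxy]
        rwa [Matrix.mulVec_mulVec, Matrix.mulVec_mulVec, hV, Matrix.one_mulVec,
          Matrix.one_mulVec] at h1
      have := LinearMap.finrank_le_finrank_of_injective hinj
      simpa [Module.finrank_fintype_fun_eq_card] using this
    have : frob D = Real.sqrt r := by
      rw [← hfd, Real.sqrt_sq (frob_nonneg D)]
    rw [this]
    exact Real.sqrt_le_sqrt (by exact_mod_cast hrn)

end FMaux


/-- **Intermediate one-step descent inequality for FedMuon** (the fourth displayed step in the
proof of the loss-update lemma), featuring the nuclear norms of the local momenta. -/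
theorem fedmuon_intermediate_descent
    (hK : 1 < K) (P : FedMuon m n K Ω) (L : ℝ) (hL : 0 < L)
    (hsmooth : SmoothGrad P L) (t : ℕ) (ω : Ω) :
    fbar P (Xbar P (t + 1) ω) ≤
      fbar P (Xbar P t ω) - P.η * ((K : ℝ)⁻¹ * ∑ k, nuclearNorm (P.M t k ω))
        + P.η * Real.sqrt n * frob (gradbar P (Xbar P t ω) - Mbar P t ω)
        + P.η * Real.sqrt n * ((K : ℝ)⁻¹ * ∑ k, frob (Mbar P t ω - P.M t k ω))
        + P.η ^ 2 * n * L / 2 := by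
  classical
  have hK0 : (0:ℝ) < K := by exact_mod_cast Nat.zero_lt_of_lt hK
  have hKne : (K:ℝ) ≠ 0 := ne_of_gt hK0
  have hKinv : (0:ℝ) ≤ (K:ℝ)⁻¹ := by positivity
  set Y : Matrix (Fin m) (Fin n) ℝ := Xbar P t ω with hY
  set G : Matrix (Fin m) (Fin n) ℝ := gradbar P Y with hG
  set Mb : Matrix (Fin m) (Fin n) ℝ := Mbar P t ω with hMb
  set Db : Matrix (Fin m) (Fin n) ℝ := (K:ℝ)⁻¹ • ∑ k, P.D t k ω with hDb
  set H : Matrix (Fin m) (Fin n) ℝ := (-P.η) • Db with hH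
  have hηpos := P.eta_pos
  have hn0 : (0:ℝ) ≤ Real.sqrt n := Real.sqrt_nonneg _
  -- Step 1: the averaged iterate moves by H
  have hstep : Xbar P (t + 1) ω = Y + H := by
    have hcommon : Y + H =
        (K:ℝ)⁻¹ • (∑ k, (P.X t k ω - P.η • P.D t k ω)) := by
      rw [hY, hH, hDb, Xbar, Finset.sum_sub_distrib, ← Finset.smul_sum]
      module
    by_cases hdvd : P.τ ∣ (t + 1)
    · have hXk : ∀ k, P.X (t + 1) k ω =
          (K:ℝ)⁻¹ • ∑ k', (P.X t k' ω - P.η • P.D t k' ω) :=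
        fun k => P.step_X_comm t k ω hdvd
      rw [Xbar, hcommon]
      rw [Finset.sum_congr rfl (fun k _ => hXk k), Finset.sum_const, Finset.card_fin,
        ← Nat.cast_smul_eq_nsmul ℝ, smul_smul, smul_smul, inv_mul_cancel₀ hKne, one_mul]
    · have hXk : ∀ k, P.X (t + 1) k ω = P.X t k ω - P.η • P.D t k ω :=
        fun k => P.step_X t k ω hdvd
      rw [Xbar, hcommon, Finset.sum_congr rfl (fun k _ => hXk k)]
  -- Step 2: descent lemma for fbar
  have hd : ∀ (Z W : Matrix (Fin m) (Fin n) ℝ),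
      HasDerivAt (fun s : ℝ => fbar P (Z + s • W)) (FMaux.ip (gradbar P Z) W) 0 := by
    intro Z W
    have hsum : HasDerivAt (fun s : ℝ => ∑ k, P.f k (Z + s • W))
        (∑ k, FMaux.ip (P.grad k Z) W) 0 :=
      HasDerivAt.fun_sum (fun k _ => P.is_grad k Z W)
    have := hsum.const_mul ((K:ℝ)⁻¹)
    have heq : FMaux.ip (gradbar P Z) W = (K:ℝ)⁻¹ * ∑ k, FMaux.ip (P.grad k Z) W := by
      rw [gradbar, FMaux.ip_smul_left, FMaux.ip_sum_left]
    rw [heq]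
    exact this
  have hlip : ∀ (Z W : Matrix (Fin m) (Fin n) ℝ),
      frob (gradbar P Z - gradbar P W) ≤ L * frob (Z - W) := by
    intro Z W
    have h1 : gradbar P Z - gradbar P W = (K:ℝ)⁻¹ • ∑ k, (P.grad k Z - P.grad k W) := by
      rw [gradbar, gradbar, Finset.sum_sub_distrib, smul_sub]
    rw [h1, FMaux.frob_smul, abs_of_nonneg hKinv]
    calc (K:ℝ)⁻¹ * frob (∑ k, (P.grad k Z - P.grad k W))
        ≤ (K:ℝ)⁻¹ * ∑ k, frob (P.grad k Z - P.grad k W) :=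
          mul_le_mul_of_nonneg_left (FMaux.frob_sum_le _ _) hKinv
      _ ≤ (K:ℝ)⁻¹ * ∑ _k : Fin K, L * frob (Z - W) :=
          mul_le_mul_of_nonneg_left
            (Finset.sum_le_sum (fun k _ => hsmooth k Z W)) hKinv
      _ = L * frob (Z - W) := by
          rw [Finset.sum_const, Finset.card_fin, nsmul_eq_mul]
          field_simp
  have hdesc : fbar P (Y + H) ≤ fbar P Y + FMaux.ip G H + L / 2 * frob H ^ 2 := by
    exact FMaux.descent (f := fbar P) (g := gradbar P) hL.le hd hlip Y H
  -- Step 3: Muon direction facts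
  have hmuon : ∀ k, FMaux.ip (P.M t k ω) (P.D t k ω) = nuclearNorm (P.M t k ω) ∧
      frob (P.D t k ω) ≤ Real.sqrt n := by
    intro k
    obtain ⟨r, U, S, V, hU, hV, hoff, hpos, hMM, hDD⟩ := P.muon_dir t k ω
    exact FMaux.muon_key r U S V hU hV hoff hpos hMM hDD
  -- bound on frob H
  have hfrobH : frob H ≤ P.η * Real.sqrt n := by
    rw [hH, FMaux.frob_smul, abs_neg, abs_of_nonneg hηpos.le, hDb, FMaux.frob_smul,
      abs_of_nonneg hKinv]
    have h1 : frob (∑ k, P.D t k ω) ≤ ∑ k, frob (P.D t k ω) := FMaux.frob_sum_le _ _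
    have h2 : (∑ k, frob (P.D t k ω)) ≤ ∑ _k : Fin K, Real.sqrt n :=
      Finset.sum_le_sum (fun k _ => (hmuon k).2)
    have h3 : (K:ℝ)⁻¹ * frob (∑ k, P.D t k ω) ≤ (K:ℝ)⁻¹ * ((K:ℝ) * Real.sqrt n) := by
      refine mul_le_mul_of_nonneg_left (h1.trans (h2.trans ?_)) hKinv
      rw [Finset.sum_const, Finset.card_fin, nsmul_eq_mul]
    calc P.η * ((K:ℝ)⁻¹ * frob (∑ k, P.D t k ω))
        ≤ P.η * ((K:ℝ)⁻¹ * ((K:ℝ) * Real.sqrt n)) :=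
          mul_le_mul_of_nonneg_left h3 hηpos.le
      _ = P.η * Real.sqrt n := by field_simp
  have hquad : L / 2 * frob H ^ 2 ≤ P.η ^ 2 * n * L / 2 := by
    have h1 : frob H ^ 2 ≤ (P.η * Real.sqrt n) ^ 2 :=
      pow_le_pow_left₀ (FMaux.frob_nonneg H) hfrobH 2
    have h2 : (P.η * Real.sqrt n) ^ 2 = P.η ^ 2 * n := by
      rw [mul_pow, Real.sq_sqrt (by positivity : (0:ℝ) ≤ (n:ℝ))]
    calc L / 2 * frob H ^ 2 ≤ L / 2 * (P.η ^ 2 * n) := by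
          refine mul_le_mul_of_nonneg_left (h1.trans_eq h2) (by linarith)
      _ = P.η ^ 2 * n * L / 2 := by ring
  -- bound on ip G H
  have hipGH : FMaux.ip G H ≤
      -(P.η * ((K:ℝ)⁻¹ * ∑ k, nuclearNorm (P.M t k ω)))
        + P.η * Real.sqrt n * frob (G - Mb)
        + P.η * Real.sqrt n * ((K:ℝ)⁻¹ * ∑ k, frob (Mb - P.M t k ω)) := by
    have hdecomp : ∀ k, nuclearNorm (P.M t k ω)
        - Real.sqrt n * frob (G - Mb) - Real.sqrt n * frob (Mb - P.M t k ω)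
        ≤ FMaux.ip G (P.D t k ω) := by
      intro k
      have hGsplit : G = (G - Mb) + ((Mb - P.M t k ω) + P.M t k ω) := by abel
      have hipeq : FMaux.ip G (P.D t k ω) =
          FMaux.ip (G - Mb) (P.D t k ω) + FMaux.ip (Mb - P.M t k ω) (P.D t k ω)
            + FMaux.ip (P.M t k ω) (P.D t k ω) := by
        conv_lhs => rw [hGsplit]
        rw [FMaux.ip_add_left, FMaux.ip_add_left]
        ring
      have hb1 : -(Real.sqrt n * frob (G - Mb)) ≤ FMaux.ip (G - Mb) (P.D t k ω) := by
        have h1 : frob (G - Mb) * frob (P.D t k ω) ≤ frob (G - Mb) * Real.sqrt n :=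
          mul_le_mul_of_nonneg_left (hmuon k).2 (FMaux.frob_nonneg _)
        have h2 := FMaux.neg_le_ip (G - Mb) (P.D t k ω)
        nlinarith [FMaux.frob_nonneg (G - Mb)]
      have hb2 : -(Real.sqrt n * frob (Mb - P.M t k ω)) ≤
          FMaux.ip (Mb - P.M t k ω) (P.D t k ω) := by
        have h1 : frob (Mb - P.M t k ω) * frob (P.D t k ω) ≤
            frob (Mb - P.M t k ω) * Real.sqrt n :=
          mul_le_mul_of_nonneg_left (hmuon k).2 (FMaux.frob_nonneg _)
        have h2 := FMaux.neg_le_ip (Mb - P.M t k ω) (P.D t k ω)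
        nlinarith [FMaux.frob_nonneg (Mb - P.M t k ω)]
      rw [hipeq, ← (hmuon k).1]
      linarith
    have hlow : (∑ k, nuclearNorm (P.M t k ω))
        - (K:ℝ) * (Real.sqrt n * frob (G - Mb))
        - Real.sqrt n * ∑ k, frob (Mb - P.M t k ω)
        ≤ ∑ k, FMaux.ip G (P.D t k ω) := by
      have := Finset.sum_le_sum (fun k (_ : k ∈ Finset.univ) => hdecomp k)
      calc (∑ k, nuclearNorm (P.M t k ω))
          - (K:ℝ) * (Real.sqrt n * frob (G - Mb))
          - Real.sqrt n * ∑ k, frob (Mb - P.M t k ω)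
          = ∑ k, (nuclearNorm (P.M t k ω) - Real.sqrt n * frob (G - Mb)
              - Real.sqrt n * frob (Mb - P.M t k ω)) := by
            rw [Finset.sum_sub_distrib, Finset.sum_sub_distrib, Finset.sum_const,
              Finset.card_fin, nsmul_eq_mul, Finset.mul_sum]
        _ ≤ ∑ k, FMaux.ip G (P.D t k ω) := this
    have hipGHval : FMaux.ip G H = (-P.η * (K:ℝ)⁻¹) * ∑ k, FMaux.ip G (P.D t k ω) := by
      rw [hH, FMaux.ip_smul_right, hDb, FMaux.ip_smul_right, FMaux.ip_sum_right]
      ring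
    have hc : (-P.η * (K:ℝ)⁻¹) ≤ 0 := by
      have : 0 ≤ P.η * (K:ℝ)⁻¹ := mul_nonneg hηpos.le hKinv
      linarith
    have hmul := mul_le_mul_of_nonpos_left hlow hc
    rw [hipGHval]
    refine hmul.trans (le_of_eq ?_)
    field_simp
    ring
  -- Assemble
  rw [hstep]
  linarith


end
end
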